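/- arXiv:0704.1524 — 6 statements merged into one kernel-verified Lean document; each statement's English description precedes it below -/
import Mathlib

section
/- If x^opt maximizes |xᴴy|²/‖x‖² over a finite codebook C of nonzero vectors, and h^opt = ((x^opt)ᴴy)/‖x^opt‖², then for every z ∈ C, ‖y - h^opt·x^opt‖ ≤ ‖y - h^opt·z‖. In other words, x^opt is a nearest neighbor in C to the point λ^opt·y with λ^opt = 1/h^opt (when h^opt ≠ 0). -/
/-!
The residual `‖y - h • x‖` with `h = ⟪x, y⟫ / ‖x‖²` is the distance from `y` to the line `ℂ ∙ x`,
and by Pythagoras its square is `‖y‖² - |⟪x, y⟫|² / ‖x‖²`. Maximising `|⟪x, y⟫|² / ‖x‖²` thus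
picks the codeword whose line is closest to `y`, and that distance is at most `‖y - h • z‖`,
since `h • z` lies on the line `ℂ ∙ z`.
-/

open scoped InnerProductSpace

namespace Submodule

variable {𝕜 E : Type*} [RCLike 𝕜] [NormedAddCommGroup E] [InnerProductSpace 𝕜 E]

theorem norm_sub_starProjection_le {K : Submodule 𝕜 E} [K.HasOrthogonalProjection] (y : E)
    {x : E} (hx : x ∈ K) : ‖y - K.starProjection y‖ ≤ ‖y - x‖ := by
  rw [starProjection_minimal]
  exact ciInf_le (f := fun u : K ↦ ‖y - u‖)
    ⟨0, Set.forall_mem_range.mpr fun _ ↦ norm_nonneg _⟩ ⟨x, hx⟩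

theorem norm_sub_starProjection_singleton_sq (v y : E) :
    ‖y - (𝕜 ∙ v).starProjection y‖ ^ 2 = ‖y‖ ^ 2 - ‖⟪v, y⟫_𝕜‖ ^ 2 / ‖v‖ ^ 2 := by
  have hproj : ‖(𝕜 ∙ v).starProjection y‖ ^ 2 = ‖⟪v, y⟫_𝕜‖ ^ 2 / ‖v‖ ^ 2 := by
    rcases eq_or_ne v 0 with rfl | hv
    · simp [span_zero_singleton]
    rw [starProjection_singleton, norm_smul, norm_div, RCLike.norm_ofReal,
      abs_of_nonneg (by positivity)]
    field_simp [norm_ne_zero_iff.mpr hv]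
  rw [← hproj, norm_sq_eq_add_norm_sq_starProjection y (𝕜 ∙ v), starProjection_orthogonal_val]
  ring

theorem norm_sub_starProjection_singleton_le {v w y : E}
    (h : ‖⟪w, y⟫_𝕜‖ ^ 2 / ‖w‖ ^ 2 ≤ ‖⟪v, y⟫_𝕜‖ ^ 2 / ‖v‖ ^ 2) :
    ‖y - (𝕜 ∙ v).starProjection y‖ ≤ ‖y - (𝕜 ∙ w).starProjection y‖ := by
  rw [← pow_le_pow_iff_left₀ (norm_nonneg _) (norm_nonneg _) two_ne_zero,
    norm_sub_starProjection_singleton_sq, norm_sub_starProjection_singleton_sq]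
  linarith

end Submodule

open Submodule in
theorem stmt2_general {T : ℕ} (C : Finset (EuclideanSpace ℂ (Fin T))) (y : EuclideanSpace ℂ (Fin T))
    (xopt : EuclideanSpace ℂ (Fin T))
    (hmax : ∀ z ∈ C, ‖(inner ℂ z y : ℂ)‖ ^ 2 / ‖z‖ ^ 2 ≤ ‖(inner ℂ xopt y : ℂ)‖ ^ 2 / ‖xopt‖ ^ 2)
    (hopt : ℂ) (hh : hopt = (inner ℂ xopt y : ℂ) / ((‖xopt‖ ^ 2 : ℝ) : ℂ)) :
    ∀ z ∈ C, ‖y - hopt • xopt‖ ≤ ‖y - hopt • z‖ := by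
  intro z hz
  calc ‖y - hopt • xopt‖ = ‖y - (ℂ ∙ xopt).starProjection y‖ := by
        rw [starProjection_singleton, hh]; rfl
    _ ≤ ‖y - (ℂ ∙ z).starProjection y‖ := norm_sub_starProjection_singleton_le (hmax z hz)
    _ ≤ ‖y - hopt • z‖ := norm_sub_starProjection_le y (smul_mem _ _ (mem_span_singleton_self z))

/-- Property 1: If `xopt` maximizes `|xᴴy|²/‖x‖²` over a finite codebook `C`
of nonzero vectors and `hopt = ⟪xopt, y⟫/‖xopt‖²`, then for every `z ∈ C`,
`‖y - hopt • xopt‖ ≤ ‖y - hopt • z‖`: the GLRT-optimal codeword is a nearest neighbor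
in `C` to the point `λopt • y` with `λopt = 1/hopt`. -/
theorem stmt2 {T : ℕ} (C : Finset (EuclideanSpace ℂ (Fin T))) (y : EuclideanSpace ℂ (Fin T))
    (hC : ∀ z ∈ C, z ≠ 0) (xopt : EuclideanSpace ℂ (Fin T)) (hxopt : xopt ∈ C)
    (hmax : ∀ z ∈ C, ‖(inner ℂ z y : ℂ)‖ ^ 2 / ‖z‖ ^ 2 ≤ ‖(inner ℂ xopt y : ℂ)‖ ^ 2 / ‖xopt‖ ^ 2)
    (hopt : ℂ) (hh : hopt = (inner ℂ xopt y : ℂ) / ((‖xopt‖ ^ 2 : ℝ) : ℂ)) :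
    ∀ z ∈ C, ‖y - hopt • xopt‖ ≤ ‖y - hopt • z‖ :=
  stmt2_general C y xopt hmax hopt hh
end

section
/- Suppose v ∈ ℝ^T satisfies: (i) for each t, x_t = argmin_{x ∈ X} |v_t - x| where X = {±1,±3,…,±(M-1)}, and (ii) x'(v - x) = 0 where x = (x_1,…,x_T). Then max_t |v_t| ≤ M + T - 2. -/
/-- The `M`-ary PAM constellation `{±1, ±3, …, ±(M-1)}` as a set of reals. -/
def pamSet (M : ℕ) : Set ℝ := {a : ℝ | ∃ k : ℤ, Odd k ∧ |k| ≤ (M : ℤ) - 1 ∧ a = (k : ℝ)}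

lemma pam_abs {M : ℕ} {a : ℝ} (ha : a ∈ pamSet M) :
    1 ≤ |a| ∧ |a| ≤ (M : ℝ) - 1 := by
  obtain ⟨k, hodd, hk, rfl⟩ := ha
  obtain ⟨m, hm⟩ := hodd
  rw [← Int.cast_abs]
  constructor
  · have h1 : (1:ℤ) ≤ |k| := by rcases abs_cases k with ⟨h,_⟩|⟨h,_⟩ <;> omega
    exact_mod_cast h1
  · exact_mod_cast hk

lemma key {M T : ℕ} (hM : Even M) (hM2 : 2 ≤ M)
    (v x : Fin T → ℝ) (hx : ∀ t, x t ∈ pamSet M)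
    (hnn : ∀ t, ∀ a ∈ pamSet M, |v t - x t| ≤ |v t - a|) (t : Fin T) :
    -|x t| ≤ x t * (v t - x t) ∧
    (1 < |v t - x t| → |x t| = (M : ℝ) - 1 ∧
      x t * (v t - x t) = |x t| * |v t - x t|) := by
  obtain ⟨k, hodd, hk, hxk⟩ := hx t
  obtain ⟨m, hm⟩ := hodd
  obtain ⟨n, hn⟩ := hM
  have hk' : -((M:ℤ)-1) ≤ k ∧ k ≤ (M:ℤ)-1 := abs_le.mp hk
  set e := v t - x t with he
  rcases lt_or_gt_of_ne (show k ≠ 0 by omega) with hneg | hpos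
  · -- k < 0
    have hmem : ((k:ℝ) + 2) ∈ pamSet M :=
      ⟨k + 2, ⟨m + 1, by omega⟩, abs_le.mpr ⟨by omega, by omega⟩, by push_cast; ring⟩
    have h1 := hnn t _ hmem
    have hrw : v t - ((k:ℝ) + 2) = e - 2 := by rw [he, hxk]; ring
    rw [hrw] at h1
    have h2 : e^2 ≤ (e-2)^2 := by
      rw [← sq_abs e, ← sq_abs (e-2)]
      exact pow_le_pow_left₀ (abs_nonneg e) h1 2
    have hem : e ≤ 1 := by nlinarith
    have hxneg : x t < 0 := by
      rw [hxk]; exact_mod_cast (by omega : (k:ℤ) < 0)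
    have habs : |x t| = -(x t) := abs_of_neg hxneg
    refine ⟨by nlinarith, fun hgt => ?_⟩
    have heneg : e < -1 := by
      rcases abs_cases e with ⟨h, h0⟩ | ⟨h, h0⟩ <;> linarith
    have hkM : k = -((M:ℤ) - 1) ∨ -((M:ℤ) - 3) ≤ k := by omega
    rcases hkM with hkM | hkM
    · constructor
      · rw [habs, hxk, hkM]; push_cast; ring
      · rw [habs, abs_of_neg (by linarith : e < 0)]; ring
    · exfalso
      have hmem2 : ((k:ℝ) - 2) ∈ pamSet M :=
        ⟨k - 2, ⟨m - 1, by omega⟩, abs_le.mpr ⟨by omega, by omega⟩, by push_cast; ring⟩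
      have h3 := hnn t _ hmem2
      have hrw2 : v t - ((k:ℝ) - 2) = e + 2 := by rw [he, hxk]; ring
      rw [hrw2] at h3
      have h4 : e^2 ≤ (e+2)^2 := by
        rw [← sq_abs e, ← sq_abs (e+2)]
        exact pow_le_pow_left₀ (abs_nonneg e) h3 2
      nlinarith
  · -- k > 0
    have hmem : ((k:ℝ) - 2) ∈ pamSet M :=
      ⟨k - 2, ⟨m - 1, by omega⟩, abs_le.mpr ⟨by omega, by omega⟩, by push_cast; ring⟩
    have h1 := hnn t _ hmem
    have hrw : v t - ((k:ℝ) - 2) = e + 2 := by rw [he, hxk]; ring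
    rw [hrw] at h1
    have h2 : e^2 ≤ (e+2)^2 := by
      rw [← sq_abs e, ← sq_abs (e+2)]
      exact pow_le_pow_left₀ (abs_nonneg e) h1 2
    have hem : -1 ≤ e := by nlinarith
    have hxpos : 0 < x t := by
      rw [hxk]; exact_mod_cast (by omega : (0:ℤ) < k)
    have habs : |x t| = x t := abs_of_pos hxpos
    refine ⟨by nlinarith, fun hgt => ?_⟩
    have hepos : 1 < e := by
      rcases abs_cases e with ⟨h, h0⟩ | ⟨h, h0⟩ <;> linarith
    have hkM : k = (M:ℤ) - 1 ∨ k ≤ (M:ℤ) - 3 := by omega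
    rcases hkM with hkM | hkM
    · constructor
      · rw [habs, hxk, hkM]; push_cast; ring
      · rw [habs, abs_of_pos (by linarith : 0 < e)]
    · exfalso
      have hmem2 : ((k:ℝ) + 2) ∈ pamSet M :=
        ⟨k + 2, ⟨m + 1, by omega⟩, abs_le.mpr ⟨by omega, by omega⟩, by push_cast; ring⟩
      have h3 := hnn t _ hmem2
      have hrw2 : v t - ((k:ℝ) + 2) = e - 2 := by rw [he, hxk]; ring
      rw [hrw2] at h3
      have h4 : e^2 ≤ (e-2)^2 := by
        rw [← sq_abs e, ← sq_abs (e-2)]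
        exact pow_le_pow_left₀ (abs_nonneg e) h3 2
      nlinarith

/-- core of Theorem 1: if `v ∈ ℝ^T` is such that `x` is the elementwise
nearest neighbor of `v` in the `M`-ary PAM constellation, and `x'(v - x) = 0`,
then `max_t |v_t| ≤ M + T - 2`. -/
theorem stmt4 {M T : ℕ} (hM : Even M) (hM2 : 2 ≤ M) (hT : 1 ≤ T)
    (v x : Fin T → ℝ) (hx : ∀ t, x t ∈ pamSet M)
    (hnn : ∀ t, ∀ a ∈ pamSet M, |v t - x t| ≤ |v t - a|)
    (horth : ∑ t, x t * (v t - x t) = 0) :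
    ∀ t, |v t| ≤ (M : ℝ) + (T : ℝ) - 2 := by
  intro t₀
  have hkey := fun t => key hM hM2 v x hx hnn t
  have habs_le : ∀ t, |x t| ≤ (M:ℝ) - 1 := fun t => (pam_abs (hx t)).2
  have habs_ge : ∀ t, (1:ℝ) ≤ |x t| := fun t => (pam_abs (hx t)).1
  set e := v t₀ - x t₀ with he
  rw [← Finset.add_sum_erase Finset.univ (fun t => x t * (v t - x t))
    (Finset.mem_univ t₀)] at horth
  have hsplit : x t₀ * e + ∑ t ∈ Finset.univ.erase t₀, x t * (v t - x t) = 0 := by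
    rw [he]; exact horth
  have hveq : v t₀ = x t₀ + e := by rw [he]; ring
  have hvabs : |v t₀| ≤ |x t₀| + |e| := by rw [hveq]; exact abs_add_le _ _
  have hMT : (1:ℝ) ≤ (T:ℝ) := by exact_mod_cast hT
  rcases eq_or_lt_of_le hT with hT1 | hT2
  · -- T = 1
    have hempty : (Finset.univ.erase t₀ : Finset (Fin T)) = ∅ := by
      apply Finset.eq_empty_of_forall_notMem
      intro t ht
      have : t ≠ t₀ := Finset.ne_of_mem_erase ht
      exact this (by omega)
    rw [hempty, Finset.sum_empty, add_zero] at hsplit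
    have hx0 : x t₀ ≠ 0 := by
      intro h; have := habs_ge t₀; rw [h, abs_zero] at this; linarith
    have he0 : e = 0 := by
      rcases mul_eq_zero.mp hsplit with h | h
      · exact absurd h hx0
      · exact h
    rw [he0, abs_zero] at hvabs
    have : (T:ℝ) = 1 := by exact_mod_cast hT1.symm
    linarith [habs_le t₀]
  · -- T ≥ 2
    have hT2' : (2:ℝ) ≤ (T:ℝ) := by exact_mod_cast hT2
    have hcard : (Finset.univ.erase t₀ : Finset (Fin T)).card = T - 1 := by
      simp [Finset.card_erase_of_mem]
    have hcardR : ((Finset.univ.erase t₀ : Finset (Fin T)).card : ℝ) = (T:ℝ) - 1 := by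
      rw [hcard]; push_cast [Nat.cast_sub hT]; ring
    have hsum_lb : -(((T:ℝ)-1) * ((M:ℝ)-1)) ≤
        ∑ t ∈ Finset.univ.erase t₀, x t * (v t - x t) := by
      have : ∑ t ∈ Finset.univ.erase t₀, (-((M:ℝ)-1)) ≤
          ∑ t ∈ Finset.univ.erase t₀, x t * (v t - x t) := by
        apply Finset.sum_le_sum
        intro t _
        exact le_trans (by linarith [habs_le t]) (hkey t).1
      rw [Finset.sum_const, nsmul_eq_mul, hcardR] at this
      linarith
    have hub : x t₀ * e ≤ ((T:ℝ)-1) * ((M:ℝ)-1) := by linarith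
    by_cases hle : |e| ≤ 1
    · linarith [habs_le t₀]
    · push_neg at hle
      obtain ⟨hxM, hprod⟩ := (hkey t₀).2 hle
      rw [hprod, hxM] at hub
      have hMpos : (0:ℝ) < (M:ℝ) - 1 := by
        have : (2:ℝ) ≤ (M:ℝ) := by exact_mod_cast hM2
        linarith
      have heT : |e| ≤ (T:ℝ) - 1 := by nlinarith
      linarith [habs_le t₀]
end

section
/- Suppose v ∈ ℝ^{2T} satisfies: (i) for each t ∈ {1,…,2T}, x_t = argmin_{a ∈ X'} |v_t - a| where X' = {±1,±3,…,±(M-1)}, and (ii) x'(v - x) = 0. Then max_t |v_t| ≤ M + 2T - 2. -/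
lemma keyA {M : ℕ} (hM : Even M) (hM2 : 2 ≤ M) {v x : ℝ}
    (hx : x ∈ pamSet M) (hnn : ∀ a ∈ pamSet M, |v - x| ≤ |v - a|)
    (he : 1 < |v - x|) : ((M : ℝ) - 1) * |v - x| ≤ x * (v - x) := by
  obtain ⟨k, hk, hkle, rfl⟩ := hx
  have hModd : Odd ((M : ℤ) - 1) := by
    rcases hM with ⟨m, rfl⟩; exact ⟨m - 1, by push_cast; ring⟩
  have hkabs := abs_le.mp hkle
  rcases abs_cases (v - (k : ℝ)) with ⟨habs, hge⟩ | ⟨habs, hlt⟩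
  · -- v - k > 1, claim k = M - 1
    rw [habs] at he ⊢
    have hk' : k = (M : ℤ) - 1 := by
      by_contra hne
      have h1 : k < (M : ℤ) - 1 := lt_of_le_of_ne hkabs.2 hne
      have h2 : Even ((M : ℤ) - 1 - k) := Odd.sub_odd hModd hk
      have hk3 : k ≤ (M : ℤ) - 3 := by obtain ⟨c, hc⟩ := h2; omega
      have hmem : ((k : ℝ) + 2) ∈ pamSet M := by
        refine ⟨k + 2, ?_, ?_, by push_cast; ring⟩
        · obtain ⟨c, hc⟩ := hk; exact ⟨c + 1, by omega⟩
        · rw [abs_le]; omega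
      have hle := hnn _ hmem
      have heq : v - ((k : ℝ) + 2) = (v - (k : ℝ)) - 2 := by ring
      rw [heq, habs] at hle
      have : |(v - (k : ℝ)) - 2| < v - (k : ℝ) := by
        rw [abs_lt]; constructor <;> linarith
      linarith
    have hkr : (k : ℝ) = (M : ℝ) - 1 := by rw [hk']; push_cast; ring
    rw [hkr]
  · -- v - k < -1, claim k = -(M - 1)
    rw [habs] at he ⊢
    have hk' : k = -((M : ℤ) - 1) := by
      by_contra hne
      have h1 : -((M : ℤ) - 1) < k := lt_of_le_of_ne hkabs.1 (Ne.symm hne)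
      have h2 : Even (k - (-((M : ℤ) - 1))) := Odd.sub_odd hk (Odd.neg hModd)
      have hk3 : -((M : ℤ) - 3) ≤ k := by obtain ⟨c, hc⟩ := h2; omega
      have hmem : ((k : ℝ) - 2) ∈ pamSet M := by
        refine ⟨k - 2, ?_, ?_, by push_cast; ring⟩
        · obtain ⟨c, hc⟩ := hk; exact ⟨c - 1, by omega⟩
        · rw [abs_le]; omega
      have hle := hnn _ hmem
      have heq : v - ((k : ℝ) - 2) = (v - (k : ℝ)) + 2 := by ring
      rw [heq, habs] at hle
      have : |(v - (k : ℝ)) + 2| < -(v - (k : ℝ)) := by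
        rw [abs_lt]; constructor <;> linarith
      linarith
    have hkr : (k : ℝ) = -((M : ℝ) - 1) := by rw [hk']; push_cast; ring
    rw [hkr]; exact le_of_eq (by ring)

lemma keyB {M : ℕ} (hM : Even M) (hM2 : 2 ≤ M) {v x : ℝ}
    (hx : x ∈ pamSet M) (hnn : ∀ a ∈ pamSet M, |v - x| ≤ |v - a|) :
    -((M : ℝ) - 1) ≤ x * (v - x) := by
  have hxabs : |x| ≤ (M : ℝ) - 1 := by
    obtain ⟨k, hk, hkle, rfl⟩ := hx
    exact_mod_cast hkle
  have hM1 : (1 : ℝ) ≤ (M : ℝ) - 1 := by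
    have : (2 : ℝ) ≤ (M : ℝ) := by exact_mod_cast hM2
    linarith
  rcases le_or_gt |v - x| 1 with h | h
  · have h1 : |x * (v - x)| ≤ ((M : ℝ) - 1) * 1 := by
      rw [abs_mul]
      exact mul_le_mul hxabs h (abs_nonneg _) (by linarith)
    have := neg_abs_le (x * (v - x))
    linarith
  · have h1 := keyA hM hM2 hx hnn h
    have h2 : (0 : ℝ) ≤ ((M : ℝ) - 1) * |v - x| :=
      mul_nonneg (by linarith) (abs_nonneg _)
    linarith

/-- Theorem 2: if `v ∈ ℝ^{2T}` is such that `x` is the elementwise nearest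
neighbor of `v` in the `M`-ary PAM constellation `X'`, and `x'(v - x) = 0`, then
`max_t |v_t| ≤ M + 2T - 2`. -/
theorem stmt6 {M T : ℕ} (hM : Even M) (hM2 : 2 ≤ M) (hT : 1 ≤ T)
    (v x : Fin (2 * T) → ℝ) (hx : ∀ t, x t ∈ pamSet M)
    (hnn : ∀ t, ∀ a ∈ pamSet M, |v t - x t| ≤ |v t - a|)
    (horth : ∑ t, x t * (v t - x t) = 0) :
    ∀ t, |v t| ≤ (M : ℝ) + 2 * (T : ℝ) - 2 := by
  intro t0
  have hM1 : (1 : ℝ) ≤ (M : ℝ) - 1 := by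
    have : (2 : ℝ) ≤ (M : ℝ) := by exact_mod_cast hM2
    linarith
  have hT1 : (1 : ℝ) ≤ (T : ℝ) := by exact_mod_cast hT
  have hxabs : |x t0| ≤ (M : ℝ) - 1 := by
    obtain ⟨k, hk, hkle, hkeq⟩ := hx t0
    rw [hkeq]
    exact_mod_cast hkle
  have habs : |v t0| ≤ |x t0| + |v t0 - x t0| := by
    have h := abs_add_le (x t0) (v t0 - x t0)
    have he : x t0 + (v t0 - x t0) = v t0 := by ring
    rwa [he] at h
  rcases le_or_gt |v t0 - x t0| 1 with h | h
  · calc |v t0| ≤ |x t0| + |v t0 - x t0| := habs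
    _ ≤ ((M : ℝ) - 1) + 1 := by linarith
    _ ≤ (M : ℝ) + 2 * (T : ℝ) - 2 := by linarith
  · have hA := keyA hM hM2 (hx t0) (hnn t0) h
    have hsplit : x t0 * (v t0 - x t0) + ∑ t ∈ Finset.univ.erase t0, x t * (v t - x t)
        = ∑ t, x t * (v t - x t) :=
      Finset.add_sum_erase Finset.univ (fun t => x t * (v t - x t)) (Finset.mem_univ t0)
    have hcard : (Finset.univ.erase t0).card = 2 * T - 1 := by
      rw [Finset.card_erase_of_mem (Finset.mem_univ t0), Finset.card_univ, Fintype.card_fin]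
    have hbound : x t0 * (v t0 - x t0) ≤ (2 * (T : ℝ) - 1) * ((M : ℝ) - 1) := by
      have h1 : x t0 * (v t0 - x t0) = -∑ t ∈ Finset.univ.erase t0, x t * (v t - x t) := by
        rw [horth] at hsplit; linarith
      have h2 : -∑ t ∈ Finset.univ.erase t0, x t * (v t - x t)
          ≤ ∑ _t ∈ Finset.univ.erase t0, ((M : ℝ) - 1) := by
        rw [← Finset.sum_neg_distrib]
        exact Finset.sum_le_sum fun t _ => by
          have := keyB hM hM2 (hx t) (hnn t); linarith
      rw [Finset.sum_const, hcard, nsmul_eq_mul] at h2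
      have hcast : ((2 * T - 1 : ℕ) : ℝ) = 2 * (T : ℝ) - 1 := by
        have : 1 ≤ 2 * T := by omega
        push_cast [this]; ring
      rw [hcast] at h2
      linarith [h1, h2]
    have he : |v t0 - x t0| ≤ 2 * (T : ℝ) - 1 := by
      nlinarith [hA, hbound]
    calc |v t0| ≤ |x t0| + |v t0 - x t0| := habs
    _ ≤ ((M : ℝ) - 1) + (2 * (T : ℝ) - 1) := by linarith
    _ ≤ (M : ℝ) + 2 * (T : ℝ) - 2 := by linarith
end

section
/- For nonzero x, y ∈ ℂ^T with real representations x̲ ∈ ℝ^{2T} and Y ∈ ℝ^{2T×2}, the GLRT metric satisfies |xᴴy|²/(‖x‖²‖y‖²) = ‖P x̲‖²/‖x̲‖², where P = Y Y'/‖y‖² is the orthogonal projection onto the column space of Y. Hence maximizing |xᴴy|²/‖x‖² is equivalent to minimizing the principal angle between x̲ and the plane Yℝ². -/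
/-!
The columns of `Y` are the real forms of `y` and `i • y`: they are orthogonal and both have
squared norm `S = ‖y‖²`, i.e. `Yᵀ Y = S • 1`. Hence `‖Y v‖² = S ‖v‖²`, so the projection
`P x̲ = Y (Yᵀ x̲) / S` has `‖P x̲‖² = ‖Yᵀ x̲‖² / S`, and `Yᵀ x̲ = (Re xᴴy, -Im xᴴy)` has squared
norm `|xᴴy|²`.
-/

open Matrix

theorem Matrix.sum_mulVec_sq_of_transpose_mul_self {m n R : Type*} [Fintype m] [Fintype n]
    [DecidableEq n] [CommRing R] {Y : Matrix m n R} {c : R} (hY : Yᵀ * Y = c • 1) (w : n → R) :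
    ∑ r, (Y *ᵥ w) r ^ 2 = c * ∑ j, w j ^ 2 := by
  simp only [sq]
  change (Y *ᵥ w) ⬝ᵥ (Y *ᵥ w) = c * (w ⬝ᵥ w)
  rw [dotProduct_mulVec, ← transpose_transpose Y, vecMul_transpose, transpose_transpose,
    mulVec_mulVec, hY, smul_mulVec, one_mulVec, smul_dotProduct, smul_eq_mul, dotProduct_comm]

theorem Matrix.sum_sq_projection {m n K : Type*} [Fintype m] [Fintype n]
    [DecidableEq n] [Field K] {Y : Matrix m n K} {c : K} (hY : Yᵀ * Y = c • 1) (v : m → K) :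
    ∑ r, (((Y * Yᵀ) *ᵥ v) r / c) ^ 2 = (∑ j, (Yᵀ *ᵥ v) j ^ 2) / c := by
  simp only [div_pow, ← Finset.sum_div, ← mulVec_mulVec, sum_mulVec_sq_of_transpose_mul_self hY]
  rcases eq_or_ne c 0 with rfl | hc
  · simp
  · field_simp

section InterleavedRealRepresentation

variable {T : ℕ}

theorem sum_sq_interleaved {z : Fin T → ℂ} {u : Fin T × Fin 2 → ℝ}
    (hu : ∀ t, u (t, 0) = (z t).re ∧ u (t, 1) = (z t).im) :
    ∑ r, u r ^ 2 = ∑ t, ‖z t‖ ^ 2 := by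
  rw [Fintype.sum_prod_type]
  refine Finset.sum_congr rfl fun t _ => ?_
  rw [Fin.sum_univ_two, (hu t).1, (hu t).2, Complex.sq_norm, Complex.normSq_apply, sq, sq]

variable {y : Fin T → ℂ} {Y : Matrix (Fin T × Fin 2) (Fin 2) ℝ}
    (hY : ∀ t, Y (t, 0) 0 = (y t).re ∧ Y (t, 1) 0 = (y t).im ∧
      Y (t, 0) 1 = -(y t).im ∧ Y (t, 1) 1 = (y t).re)
include hY

theorem transpose_mul_self_of_interleaved : Yᵀ * Y = (∑ t, ‖y t‖ ^ 2) • 1 := by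
  ext i j
  simp only [mul_apply, transpose_apply, Fintype.sum_prod_type, Fin.sum_univ_two,
    Matrix.smul_apply, smul_eq_mul, Finset.sum_mul]
  refine Finset.sum_congr rfl fun t _ => ?_
  obtain ⟨h00, h10, h01, h11⟩ := hY t
  fin_cases i <;> fin_cases j <;>
    simp [h00, h10, h01, h11, Complex.sq_norm, Complex.normSq_apply] <;> ring

theorem transpose_mulVec_of_interleaved {x : Fin T → ℂ} {xu : Fin T × Fin 2 → ℝ}
    (hxu : ∀ t, xu (t, 0) = (x t).re ∧ xu (t, 1) = (x t).im) :
    Yᵀ *ᵥ xu =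
      ![(∑ t, (starRingEnd ℂ) (x t) * y t).re, -(∑ t, (starRingEnd ℂ) (x t) * y t).im] := by
  ext j
  fin_cases j <;>
    simp only [mulVec, dotProduct, Fintype.sum_prod_type, Fin.sum_univ_two, Complex.re_sum,
      Complex.im_sum, ← Finset.sum_neg_distrib] <;>
    refine Finset.sum_congr rfl fun t _ => ?_ <;>
    simp [hY t, hxu t, Complex.mul_re, Complex.mul_im] <;> ring

theorem sum_sq_transpose_mulVec_of_interleaved {x : Fin T → ℂ} {xu : Fin T × Fin 2 → ℝ}
    (hxu : ∀ t, xu (t, 0) = (x t).re ∧ xu (t, 1) = (x t).im) :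
    ∑ j, (Yᵀ *ᵥ xu) j ^ 2 = ‖∑ t, (starRingEnd ℂ) (x t) * y t‖ ^ 2 := by
  rw [transpose_mulVec_of_interleaved hY hxu, Fin.sum_univ_two, cons_val_zero, cons_val_one,
    cons_val_zero, neg_sq, Complex.sq_norm, Complex.normSq_apply, sq, sq]

end InterleavedRealRepresentation

theorem stmt9_general {T : ℕ} (x y : Fin T → ℂ)
    (Y : Fin T × Fin 2 → Fin 2 → ℝ)
    (hY : ∀ t : Fin T,
      Y (t, 0) 0 = (y t).re ∧ Y (t, 1) 0 = (y t).im ∧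
      Y (t, 0) 1 = -(y t).im ∧ Y (t, 1) 1 = (y t).re)
    (xu : Fin T × Fin 2 → ℝ)
    (hxu : ∀ t : Fin T, xu (t, 0) = (x t).re ∧ xu (t, 1) = (x t).im)
    (Px : Fin T × Fin 2 → ℝ)
    (hPx : ∀ r, Px r =
      (∑ r' : Fin T × Fin 2, (∑ j : Fin 2, Y r j * Y r' j) * xu r') /
        (∑ t, ‖y t‖ ^ 2)) :
    ‖∑ t, (starRingEnd ℂ) (x t) * y t‖ ^ 2 /
      ((∑ t, ‖x t‖ ^ 2) * (∑ t, ‖y t‖ ^ 2)) =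
    (∑ r : Fin T × Fin 2, Px r ^ 2) / (∑ r : Fin T × Fin 2, xu r ^ 2) := by
  -- `of Y` so that `*` is the matrix product, not the pointwise one on functions.
  have hP : ∀ r, Px r = ((of Y * (of Y)ᵀ) *ᵥ xu) r / ∑ t, ‖y t‖ ^ 2 := hPx
  have hYm : (of Y)ᵀ * of Y = (∑ t, ‖y t‖ ^ 2) • 1 := transpose_mul_self_of_interleaved hY
  simp only [hP, sum_sq_projection hYm, sum_sq_transpose_mulVec_of_interleaved (Y := of Y) hY hxu,
    sum_sq_interleaved hxu]
  rw [div_div, mul_comm]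

/-- For nonzero `x, y ∈ ℂ^T` with interleaved real representation
`x̲ ∈ ℝ^{2T}` and `Y ∈ ℝ^{2T×2}` (eq. (7)), the GLRT metric satisfies
`|xᴴy|²/(‖x‖²‖y‖²) = ‖P x̲‖²/‖x̲‖²` where `P = Y Y'/‖y‖²` is the orthogonal
projection onto the column space of `Y`. -/
theorem stmt9 {T : ℕ} (x y : Fin T → ℂ) (hx : x ≠ 0) (hy : y ≠ 0)
    (Y : Fin T × Fin 2 → Fin 2 → ℝ)
    (hY : ∀ t : Fin T,
      Y (t, 0) 0 = (y t).re ∧ Y (t, 1) 0 = (y t).im ∧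
      Y (t, 0) 1 = -(y t).im ∧ Y (t, 1) 1 = (y t).re)
    (xu : Fin T × Fin 2 → ℝ)
    (hxu : ∀ t : Fin T, xu (t, 0) = (x t).re ∧ xu (t, 1) = (x t).im)
    (Px : Fin T × Fin 2 → ℝ)
    (hPx : ∀ r, Px r =
      (∑ r' : Fin T × Fin 2, (∑ j : Fin 2, Y r j * Y r' j) * xu r') /
        (∑ t, ‖y t‖ ^ 2)) :
    ‖∑ t, (starRingEnd ℂ) (x t) * y t‖ ^ 2 /
      ((∑ t, ‖x t‖ ^ 2) * (∑ t, ‖y t‖ ^ 2)) =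
    (∑ r : Fin T × Fin 2, Px r ^ 2) / (∑ r : Fin T × Fin 2, xu r ^ 2) :=
  stmt9_general x y Y hY xu hxu Px hPx
end

section
/- If x maximizes |xᴴy|²/‖x‖² over a codebook that is a full Cartesian product C = X^T of a finite constellation X ⊂ ℂ, and λ^opt = 1/h^opt is the reciprocal of the GLRT channel estimate, then each coordinate satisfies x_t = argmin_{a ∈ X} |λ^opt·y_t - a|; i.e., the optimal codeword is the elementwise nearest neighbor of λ^opt·y. -/
/-! The GLRT metric `‖⟪z, y⟫‖² / ‖z‖²` is `‖y‖²` minus the least-squares residual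
`min_h ‖y - h z‖²`, the minimum being attained at the channel estimate `h = ⟪z, y⟫ / ‖z‖²`.
Hence a maximizer `x` of the metric over the codebook also minimizes `‖y - hᵒᵖᵗ z‖` over all
codewords `z`, at the fixed gain `hᵒᵖᵗ` of `x`. For a product codebook this residual is a sum
of independent per-coordinate terms `‖y_t - hᵒᵖᵗ z_t‖²`, so each `x_t` minimizes
`‖y_t - hᵒᵖᵗ a‖` over `a ∈ X`; dividing by `hᵒᵖᵗ` gives the claim. -/

open scoped InnerProductSpace

section LeastSquares

variable {𝕜 E : Type*} [RCLike 𝕜] [NormedAddCommGroup E] [InnerProductSpace 𝕜 E]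

variable (𝕜) in
noncomputable def channelEstimate (z y : E) : 𝕜 := ⟪z, y⟫_𝕜 / ((‖z‖ ^ 2 : ℝ) : 𝕜)

variable (𝕜) in
noncomputable def glrtMetric (z y : E) : ℝ := ‖⟪z, y⟫_𝕜‖ ^ 2 / ‖z‖ ^ 2

theorem inner_sub_channelEstimate_smul (z y : E) :
    ⟪z, y - channelEstimate 𝕜 z y • z⟫_𝕜 = 0 := by
  rcases eq_or_ne z 0 with rfl | hz
  · simp
  have hz' : ((‖z‖ : ℝ) : 𝕜) ≠ 0 := by simpa using hz
  rw [inner_sub_right, inner_smul_right, inner_self_eq_norm_sq_to_K, channelEstimate]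
  push_cast
  field_simp
  ring

theorem norm_sub_smul_sq (z y : E) (h : 𝕜) :
    ‖y - h • z‖ ^ 2 =
      ‖y - channelEstimate 𝕜 z y • z‖ ^ 2 + ‖channelEstimate 𝕜 z y - h‖ ^ 2 * ‖z‖ ^ 2 := by
  set c : 𝕜 := channelEstimate 𝕜 z y
  have horth : ⟪y - c • z, (c - h) • z⟫_𝕜 = 0 := by
    rw [inner_smul_right, ← inner_conj_symm, inner_sub_channelEstimate_smul]; simp
  have hsplit : y - h • z = (y - c • z) + (c - h) • z := by
    rw [sub_smul]; abel
  rw [hsplit, sq, sq, sq, norm_add_sq_eq_norm_sq_add_norm_sq_of_inner_eq_zero _ _ horth,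
    norm_smul]
  ring

theorem norm_sub_channelEstimate_smul_sq (z y : E) :
    ‖y - channelEstimate 𝕜 z y • z‖ ^ 2 = ‖y‖ ^ 2 - glrtMetric 𝕜 z y := by
  have hpyth := norm_sub_smul_sq z y (0 : 𝕜)
  rw [zero_smul, sub_zero, sub_zero] at hpyth
  rw [hpyth, glrtMetric, channelEstimate, norm_div]
  rcases eq_or_ne z 0 with rfl | hz
  · simp
  have hz' : ‖z‖ ≠ 0 := norm_ne_zero_iff.mpr hz
  simp only [RCLike.norm_ofReal, abs_pow, abs_norm]
  field_simp
  ring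

theorem norm_sub_channelEstimate_smul_le_of_isMaxOn {S : Set E} {x y z : E}
    (hmax : IsMaxOn (glrtMetric 𝕜 · y) S x) (hz : z ∈ S) :
    ‖y - channelEstimate 𝕜 x y • x‖ ≤ ‖y - channelEstimate 𝕜 x y • z‖ := by
  rw [← pow_le_pow_iff_left₀ (norm_nonneg _) (norm_nonneg _) two_ne_zero]
  calc ‖y - channelEstimate 𝕜 x y • x‖ ^ 2
      = ‖y‖ ^ 2 - glrtMetric 𝕜 x y := norm_sub_channelEstimate_smul_sq x y
    _ ≤ ‖y‖ ^ 2 - glrtMetric 𝕜 z y := by linarith [isMaxOn_iff.mp hmax z hz]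
    _ = ‖y - channelEstimate 𝕜 z y • z‖ ^ 2 := (norm_sub_channelEstimate_smul_sq z y).symm
    _ ≤ ‖y - channelEstimate 𝕜 x y • z‖ ^ 2 := by
      rw [norm_sub_smul_sq z y (channelEstimate 𝕜 x y)]
      exact le_add_of_nonneg_right (by positivity)

end LeastSquares

theorem le_of_sum_le_sum_update {ι M : Type*} [Fintype ι] [DecidableEq ι]
    [AddCommMonoid M] [PartialOrder M] [IsOrderedCancelAddMonoid M] (f : ι → M) (t : ι) (b : M)
    (h : ∑ i, f i ≤ ∑ i, Function.update f t b i) : f t ≤ b := by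
  rwa [Finset.sum_update_of_mem (Finset.mem_univ t),
    Finset.sum_eq_add_sum_sdiff_singleton_of_mem (Finset.mem_univ t), add_le_add_iff_right] at h

theorem norm_inv_mul_sub {K : Type*} [NormedField K] {h : K} (hh : h ≠ 0) (u v : K) :
    ‖h⁻¹ * u - v‖ = ‖h‖⁻¹ * ‖u - h * v‖ := by
  rw [← norm_inv, ← norm_mul, mul_sub, inv_mul_cancel_left₀ hh]

namespace EuclideanSpace

variable {𝕜 ι : Type*} [RCLike 𝕜] [Fintype ι]

theorem inner_toLp_toLp_eq_sum (x y : ι → 𝕜) :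
    ⟪WithLp.toLp 2 x, WithLp.toLp 2 y⟫_𝕜 = ∑ i, starRingEnd 𝕜 (x i) * y i := by
  simp [inner_toLp_toLp, dotProduct, mul_comm]

theorem channelEstimate_toLp (x y : ι → 𝕜) :
    channelEstimate 𝕜 (WithLp.toLp 2 x) (WithLp.toLp 2 y) =
      (∑ i, starRingEnd 𝕜 (x i) * y i) / ((∑ i, ‖x i‖ ^ 2 : ℝ) : 𝕜) := by
  rw [channelEstimate, inner_toLp_toLp_eq_sum, norm_sq_eq]

theorem glrtMetric_toLp (x y : ι → 𝕜) :
    glrtMetric 𝕜 (WithLp.toLp 2 x) (WithLp.toLp 2 y) =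
      ‖∑ i, starRingEnd 𝕜 (x i) * y i‖ ^ 2 / ∑ i, ‖x i‖ ^ 2 := by
  rw [glrtMetric, inner_toLp_toLp_eq_sum, norm_sq_eq]

theorem norm_sub_channelEstimate_mul_le_of_isMaxOn [DecidableEq ι] {X : Set 𝕜}
    {x y : EuclideanSpace 𝕜 ι} (hmax : IsMaxOn (glrtMetric 𝕜 · y) {z | ∀ i, z i ∈ X} x)
    (hx : ∀ i, x i ∈ X) (t : ι) {a : 𝕜} (ha : a ∈ X) :
    ‖y t - channelEstimate 𝕜 x y * x t‖ ≤ ‖y t - channelEstimate 𝕜 x y * a‖ := by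
  set c := channelEstimate 𝕜 x y
  set z : EuclideanSpace 𝕜 ι := WithLp.toLp 2 (Function.update x.ofLp t a)
  have hz : ∀ i, z i ∈ X := by
    intro i
    rcases eq_or_ne i t with rfl | hi
    · simpa [z] using ha
    · simpa [z, hi] using hx i
  have hres := norm_sub_channelEstimate_smul_le_of_isMaxOn hmax (z := z) hz
  rw [← pow_le_pow_iff_left₀ (norm_nonneg _) (norm_nonneg _) two_ne_zero, norm_sq_eq,
    norm_sq_eq] at hres
  have hupdate : (fun i ↦ ‖(y - c • z) i‖ ^ 2) =
      Function.update (fun i ↦ ‖(y - c • x) i‖ ^ 2) t (‖y t - c * a‖ ^ 2) := by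
    funext i
    rcases eq_or_ne i t with rfl | hi
    · simp [z]
    · simp [z, hi]
  rw [hupdate] at hres
  have hsq := le_of_sum_le_sum_update _ t _ hres
  rw [← pow_le_pow_iff_left₀ (norm_nonneg _) (norm_nonneg _) two_ne_zero]
  simpa using hsq

end EuclideanSpace

theorem stmt11_general {T : ℕ} (X : Finset ℂ)
    (y x : Fin T → ℂ) (hx : ∀ t, x t ∈ X)
    (hmax : ∀ z : Fin T → ℂ, (∀ t, z t ∈ X) →
      ‖∑ t, (starRingEnd ℂ) (z t) * y t‖ ^ 2 / (∑ t, ‖z t‖ ^ 2) ≤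
      ‖∑ t, (starRingEnd ℂ) (x t) * y t‖ ^ 2 / (∑ t, ‖x t‖ ^ 2))
    (hopt : ℂ)
    (hh : hopt = (∑ t, (starRingEnd ℂ) (x t) * y t) / ((∑ t, ‖x t‖ ^ 2 : ℝ) : ℂ))
    (hne : hopt ≠ 0) :
    ∀ t, ∀ a ∈ X, ‖hopt⁻¹ * y t - x t‖ ≤ ‖hopt⁻¹ * y t - a‖ := by
  intro t a ha
  have hmax' : IsMaxOn (glrtMetric ℂ · (WithLp.toLp 2 y)) {z | ∀ i, z i ∈ (X : Set ℂ)}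
      (WithLp.toLp 2 x) := fun z hz ↦ by
    have := hmax z.ofLp hz
    rwa [← EuclideanSpace.glrtMetric_toLp, ← EuclideanSpace.glrtMetric_toLp,
      WithLp.toLp_ofLp] at this
  have hestimate : channelEstimate ℂ (WithLp.toLp 2 x) (WithLp.toLp 2 y) = hopt :=
    (EuclideanSpace.channelEstimate_toLp x y).trans hh.symm
  have hcoord := EuclideanSpace.norm_sub_channelEstimate_mul_le_of_isMaxOn hmax' hx t ha
  rw [hestimate] at hcoord
  rw [norm_inv_mul_sub hne, norm_inv_mul_sub hne]
  exact mul_le_mul_of_nonneg_left hcoord (by positivity)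

/-- If `x` maximizes `|xᴴy|²/‖x‖²` over the full Cartesian-product codebook
`C = X^T` of a finite constellation `X ⊂ ℂ \ {0}`, and `λopt = 1/hopt` is the reciprocal
of the (nonzero) GLRT channel estimate `hopt = xᴴy/‖x‖²`, then each coordinate satisfies
`x_t = argmin_{a ∈ X} |λopt·y_t - a|`. -/
theorem stmt11 {T : ℕ} (X : Finset ℂ) (hXne : X.Nonempty) (hX0 : (0 : ℂ) ∉ X)
    (y x : Fin T → ℂ) (hx : ∀ t, x t ∈ X)
    (hmax : ∀ z : Fin T → ℂ, (∀ t, z t ∈ X) →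
      ‖∑ t, (starRingEnd ℂ) (z t) * y t‖ ^ 2 / (∑ t, ‖z t‖ ^ 2) ≤
      ‖∑ t, (starRingEnd ℂ) (x t) * y t‖ ^ 2 / (∑ t, ‖x t‖ ^ 2))
    (hopt : ℂ)
    (hh : hopt = (∑ t, (starRingEnd ℂ) (x t) * y t) / ((∑ t, ‖x t‖ ^ 2 : ℝ) : ℂ))
    (hne : hopt ≠ 0) :
    ∀ t, ∀ a ∈ X, ‖hopt⁻¹ * y t - x t‖ ≤ ‖hopt⁻¹ * y t - a‖ :=
  stmt11_general X y x hx hmax hopt hh hne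
end

section
/- In 16-QAM with the parity scheme, there is no codeword x ∈ A(1+i)^T (T ≥ 2) whose first symbol is a valid parity symbol: if all data symbols x_2,…,x_T lie in {±(1+i), ±(1−i)} then the parity bits computed from the data via p₂ = 1 + ∑ d_{2t} (mod 2) give p₂ = 1, forcing x₁ ∈ {1+3i, 3+3i}, hence x₁ ∉ A(1+i) = {1+i, −1+i, −1−i, 1−i}. -/
/-- Bit-pair to 16-QAM level mapping of Table IV: `(11)↦1, (01)↦−1, (00)↦−3, (10)↦3`. -/
def bitLevel (b1 b2 : ZMod 2) : ℝ :=
  if b2 = 1 then (if b1 = 1 then 1 else -1) else (if b1 = 1 then 3 else -3)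

/-- Parity-bit pair to pilot-symbol mapping: `(00)↦1+i, (01)↦1+3i, (11)↦3+3i, (10)↦3+i`. -/
def paritySymbol (p1 p2 : ZMod 2) : ℂ :=
  if p1 = 0 ∧ p2 = 0 then 1 + Complex.I
  else if p1 = 0 ∧ p2 = 1 then 1 + 3 * Complex.I
  else if p1 = 1 ∧ p2 = 1 then 3 + 3 * Complex.I
  else 3 + Complex.I

/-- The associate class `A(1+i) = {1+i, −1+i, −1−i, 1−i}`. -/
def A1i : Set ℂ :=
  {1 + Complex.I, -1 + Complex.I, -1 - Complex.I, 1 - Complex.I}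

/-!
Every symbol of `A(1+i)` has real and imaginary parts `±1`, and in the Gray mapping the levels
`±1` are exactly those whose second bit is `1`. Hence all the bits `d_{2t}` of an all-`A(1+i)` data
block equal `1`; there are `2(T-1)` of them, an even number, so `p₂ = 1`. Every parity symbol with
`p₂ = 1` has imaginary part `3`, so it is not in `A(1+i)`.
-/

lemma ZMod.two_eq_zero_or_one (b : ZMod 2) : b = 0 ∨ b = 1 := by
  revert b
  decide

lemma abs_bitLevel_eq_one_iff (b1 b2 : ZMod 2) : |bitLevel b1 b2| = 1 ↔ b2 = 1 := by
  obtain rfl | rfl := ZMod.two_eq_zero_or_one b1 <;>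
    obtain rfl | rfl := ZMod.two_eq_zero_or_one b2 <;> norm_num [bitLevel]

lemma abs_re_eq_one_and_abs_im_eq_one_of_mem_A1i {z : ℂ} (hz : z ∈ A1i) :
    |z.re| = 1 ∧ |z.im| = 1 := by
  rcases hz with rfl | rfl | rfl | rfl <;> norm_num

lemma paritySymbol_im_of_right_eq_one (p1 : ZMod 2) : (paritySymbol p1 1).im = 3 := by
  obtain rfl | rfl := ZMod.two_eq_zero_or_one p1 <;> norm_num [paritySymbol]

lemma paritySymbol_mem_of_right_eq_one (p1 : ZMod 2) :
    paritySymbol p1 1 ∈ ({1 + 3 * Complex.I, 3 + 3 * Complex.I} : Set ℂ) := by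
  obtain rfl | rfl := ZMod.two_eq_zero_or_one p1 <;> norm_num [paritySymbol]

lemma paritySymbol_not_mem_A1i_of_right_eq_one (p1 : ZMod 2) : paritySymbol p1 1 ∉ A1i := by
  intro h
  have him := (abs_re_eq_one_and_abs_im_eq_one_of_mem_A1i h).2
  norm_num [paritySymbol_im_of_right_eq_one] at him

lemma exists_two_mul_eq_four_mul_add_two_or_four {n t : ℕ} (ht : t ∈ Finset.Icc 1 (2 * n)) :
    ∃ s < n, 2 * t = 4 * s + 2 ∨ 2 * t = 4 * s + 4 := by
  rw [Finset.mem_Icc] at ht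
  exact ⟨(t - 1) / 2, by omega, by omega⟩

lemma sum_Icc_even_bits_eq_zero (n : ℕ) (d : ℕ → ZMod 2)
    (hd : ∀ s < n, d (4 * s + 2) = 1 ∧ d (4 * s + 4) = 1) :
    ∑ t ∈ Finset.Icc 1 (2 * n), d (2 * t) = 0 := by
  have hone : ∀ t ∈ Finset.Icc 1 (2 * n), d (2 * t) = 1 := by
    intro t ht
    obtain ⟨s, hs, h | h⟩ := exists_two_mul_eq_four_mul_add_two_or_four ht <;> rw [h]
    exacts [(hd s hs).1, (hd s hs).2]
  rw [Finset.sum_congr rfl hone, Finset.sum_const, Nat.card_Icc, nsmul_eq_mul, mul_one,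
    Nat.add_sub_cancel, Nat.cast_mul, ZMod.natCast_self, zero_mul]

theorem stmt17_general {T : ℕ} (d : ℕ → ZMod 2)
    (xD : Fin (T - 1) → ℂ) (x1 : ℂ)
    (hmap : ∀ s : Fin (T - 1),
      (xD s).re = bitLevel (d (4 * (s : ℕ) + 1)) (d (4 * (s : ℕ) + 2)) ∧
      (xD s).im = bitLevel (d (4 * (s : ℕ) + 3)) (d (4 * (s : ℕ) + 4)))
    (hA : ∀ s, xD s ∈ A1i)
    (p1 p2 : ZMod 2)
    (hp2 : p2 = 1 + ∑ t ∈ Finset.Icc 1 (2 * (T - 1)), d (2 * t))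
    (hx1 : x1 = paritySymbol p1 p2) :
    p2 = 1 ∧ x1 ∈ ({1 + 3 * Complex.I, 3 + 3 * Complex.I} : Set ℂ) ∧ x1 ∉ A1i := by
  have hbits : ∀ s < T - 1, d (4 * s + 2) = 1 ∧ d (4 * s + 4) = 1 := by
    intro s hs
    obtain ⟨hre, him⟩ := abs_re_eq_one_and_abs_im_eq_one_of_mem_A1i (hA ⟨s, hs⟩)
    rw [(hmap ⟨s, hs⟩).1, abs_bitLevel_eq_one_iff] at hre
    rw [(hmap ⟨s, hs⟩).2, abs_bitLevel_eq_one_iff] at him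
    exact ⟨hre, him⟩
  have hp2_eq : p2 = 1 := by rw [hp2, sum_Icc_even_bits_eq_zero _ d hbits, add_zero]
  subst hp2_eq hx1
  exact ⟨rfl, paritySymbol_mem_of_right_eq_one p1, paritySymbol_not_mem_A1i_of_right_eq_one p1⟩

/-- Case 1 of Appendix B: for 16-QAM with the parity scheme, if all data
symbols `xD s` (for `s = 0,…,T-2`, i.e. symbols `x_2,…,x_T`) lie in `A(1+i)`, then the
parity bit `p₂ = 1 + ∑ d_{2t}` equals `1`, forcing the pilot symbol
`x₁ ∈ {1+3i, 3+3i}`, hence `x₁ ∉ A(1+i)`. -/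
theorem stmt17 {T : ℕ} (hT : 2 ≤ T) (d : ℕ → ZMod 2)
    (xD : Fin (T - 1) → ℂ) (x1 : ℂ)
    (hmap : ∀ s : Fin (T - 1),
      (xD s).re = bitLevel (d (4 * (s : ℕ) + 1)) (d (4 * (s : ℕ) + 2)) ∧
      (xD s).im = bitLevel (d (4 * (s : ℕ) + 3)) (d (4 * (s : ℕ) + 4)))
    (hA : ∀ s, xD s ∈ A1i)
    (p1 p2 : ZMod 2)
    (hp1 : p1 = 1 + ∑ t ∈ Finset.Icc 1 (4 * (T - 1)), d t)
    (hp2 : p2 = 1 + ∑ t ∈ Finset.Icc 1 (2 * (T - 1)), d (2 * t))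
    (hx1 : x1 = paritySymbol p1 p2) :
    p2 = 1 ∧ x1 ∈ ({1 + 3 * Complex.I, 3 + 3 * Complex.I} : Set ℂ) ∧ x1 ∉ A1i :=
  stmt17_general d xD x1 hmap hA p1 p2 hp2 hx1
end
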